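/- Let G be a bidding game over a full binary tree with leaf set T, played with budgets (B_1, B_2), B_1 + B_2 = 1. Then any pure subgame-perfect equilibrium outcome t* satisfies the (B_1, B_2)-satisfaction test: for each player i, the number of leaves t with t* ⪰_i t is at least ⌈B_i·|T|⌉. -/
import Mathlib


/-- A game tree for two-player bidding games: leaves carry utilities for both players. -/
inductive GTree where
  | leaf : ℝ → ℝ → GTree
  | node : List GTree → GTree

namespace GTree

/-- Height of a game tree. -/
def height : GTree → ℕ
  | .leaf _ _ => 0
  | .node [] => 1
  | .node (c :: cs) => max (1 + height c) (height (.node cs))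

/-- The list of leaf payoff pairs of a game tree. -/
def leaves : GTree → List (ℝ × ℝ)
  | .leaf a b => [(a, b)]
  | .node [] => []
  | .node (c :: cs) => leaves c ++ leaves (.node cs)

/-- Subtree relation. -/
inductive Subtree : GTree → GTree → Prop
  | refl (s : GTree) : Subtree s s
  | step {s c : GTree} {cs : List GTree} : c ∈ cs → Subtree s c → Subtree s (.node cs)

/-- A (Markov) strategy profile: at each subgame and budget of player 1, it gives
the bids `(b1, b2)` of the two players and the indices of the children each player
would move to upon winning the round. -/
abbrev Profile := GTree → ℝ → ℝ × ℝ × ℕ × ℕ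

/-- Play with explicit fuel (the height of the tree suffices). The higher bidder
(ties to player 1) pays her bid to the other player and moves to her chosen child. -/
noncomputable def playAux (γ : Profile) : ℕ → GTree → ℝ → ℝ × ℝ
  | _, .leaf u1 u2, _ => (u1, u2)
  | 0, .node _, _ => (0, 0)
  | n + 1, .node cs, B1 =>
      let a := γ (.node cs) B1
      if a.2.1 ≤ a.1 then
        playAux γ n (cs.getD a.2.2.1 (.leaf 0 0)) (B1 - a.1)
      else
        playAux γ n (cs.getD a.2.2.2 (.leaf 0 0)) (B1 + a.2.1)

/-- The outcome (pair of utilities at the reached leaf) from playing `γ` in `G`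
with initial budget `B1` for player 1 (player 2 has `1 - B1`). -/
noncomputable def outcome (γ : Profile) (G : GTree) (B1 : ℝ) : ℝ × ℝ :=
  playAux γ (height G) G B1

/-- Validity of an action tuple at a node with children `cs` under budget `B1`. -/
def validAct (cs : List GTree) (B1 : ℝ) (a : ℝ × ℝ × ℕ × ℕ) : Prop :=
  0 ≤ a.1 ∧ a.1 ≤ B1 ∧ 0 ≤ a.2.1 ∧ a.2.1 ≤ 1 - B1 ∧
  a.2.2.1 < cs.length ∧ a.2.2.2 < cs.length

/-- Equilibrium conditions for an action tuple `a` at a node with children `cs`,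
budget `B1` of player 1, given that play in all subgames follows `γ`:
each player's designated move is optimal for her; the winner cannot gain by
winning with a different bid (and any move) nor by dropping the round; the loser
cannot gain by overbidding (with any move). -/
def eqAct (γ : Profile) (cs : List GTree) (B1 : ℝ) (a : ℝ × ℝ × ℕ × ℕ) : Prop :=
  let b1 := a.1
  let b2 := a.2.1
  let c1 := cs.getD a.2.2.1 (.leaf 0 0)
  let c2 := cs.getD a.2.2.2 (.leaf 0 0)
  (∀ c ∈ cs, (outcome γ c (B1 - b1)).1 ≤ (outcome γ c1 (B1 - b1)).1) ∧
  (∀ c ∈ cs, (outcome γ c (B1 + b2)).2 ≤ (outcome γ c2 (B1 + b2)).2) ∧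
  (if b2 ≤ b1 then
    (∀ b1', 0 ≤ b1' → b1' ≤ B1 → b2 ≤ b1' → ∀ c ∈ cs,
        (outcome γ c (B1 - b1')).1 ≤ (outcome γ c1 (B1 - b1)).1) ∧
    (0 < b2 → (outcome γ c2 (B1 + b2)).1 ≤ (outcome γ c1 (B1 - b1)).1) ∧
    (∀ b2', b2' ≤ 1 - B1 → b1 < b2' → ∀ c ∈ cs,
        (outcome γ c (B1 + b2')).2 ≤ (outcome γ c1 (B1 - b1)).2)
  else
    (∀ b2', 0 ≤ b2' → b2' ≤ 1 - B1 → b1 < b2' → ∀ c ∈ cs,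
        (outcome γ c (B1 + b2')).2 ≤ (outcome γ c2 (B1 + b2)).2) ∧
    ((outcome γ c1 (B1 - b1)).2 ≤ (outcome γ c2 (B1 + b2)).2) ∧
    (∀ b1', 0 ≤ b1' → b1' ≤ B1 → b2 ≤ b1' → ∀ c ∈ cs,
        (outcome γ c (B1 - b1')).1 ≤ (outcome γ c2 (B1 + b2)).1))

/-- `γ` is a pure subgame-perfect equilibrium of `G`: at every subgame and every
budget partition, the prescribed actions are valid and no player has a profitable
unilateral (one-shot) deviation. -/
def IsPSPE (γ : Profile) (G : GTree) : Prop :=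
  ∀ cs, Subtree (.node cs) G → ∀ B1 : ℝ, 0 ≤ B1 → B1 ≤ 1 →
    validAct cs B1 (γ (.node cs) B1) ∧ eqAct γ cs B1 (γ (.node cs) B1)

/-- Every internal node has at least one child. -/
def WF (G : GTree) : Prop := ∀ cs, Subtree (.node cs) G → cs ≠ []

/-- Every internal node has exactly two children. -/
def IsBinary (G : GTree) : Prop := ∀ cs, Subtree (.node cs) G → cs.length = 2

end GTree

open GTree

namespace GTree

/-- `FullBin h G` : `G` is a full binary tree of height `h`. -/
def FullBin : ℕ → GTree → Prop
  | 0, .leaf _ _ => True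
  | h + 1, .node [l, r] => FullBin h l ∧ FullBin h r
  | _, _ => False

end GTree

open GTree
namespace GTree
theorem Subtree.trans' {a b c : GTree} (h1 : Subtree a b) (h2 : Subtree b c) : Subtree a c := by
  induction h2 with
  | refl => exact h1
  | step hmem _ ih => exact Subtree.step hmem ih

theorem fullbin_succ {n : ℕ} {G : GTree} (h : FullBin (n+1) G) :
    ∃ l r, G = .node [l, r] ∧ FullBin n l ∧ FullBin n r := by
  cases G with
  | leaf a b => simp [FullBin] at h
  | node cs =>
    match cs with
    | [] => simp [FullBin] at h
    | [a] => simp [FullBin] at h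
    | [a, b] => exact ⟨a, b, rfl, h⟩
    | a :: b :: c :: cs => simp [FullBin] at h

theorem fullbin_zero {cs : List GTree} (h : FullBin 0 (.node cs)) : False := by
  simp [FullBin] at h

theorem fullbin_height : ∀ (n : ℕ) (G : GTree), FullBin n G → height G = n := by
  intro n
  induction n with
  | zero =>
    intro G hG
    cases G with
    | leaf a b => simp [height]
    | node cs => exact (fullbin_zero hG).elim
  | succ m ih =>
    intro G hG
    obtain ⟨l, r, rfl, hl, hr⟩ := fullbin_succ hG
    simp [height, ih l hl, ih r hr]
    omega

theorem playAux_leaf (γ : Profile) (u1 u2 B : ℝ) (k : ℕ) :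
    playAux γ k (.leaf u1 u2) B = (u1, u2) := by
  simp [playAux]

theorem playAux_node (γ : Profile) (cs : List GTree) (n : ℕ) (B1 : ℝ) :
    playAux γ (n+1) (.node cs) B1 =
      (let a := γ (.node cs) B1
       if a.2.1 ≤ a.1 then
        playAux γ n (cs.getD a.2.2.1 (.leaf 0 0)) (B1 - a.1)
      else
        playAux γ n (cs.getD a.2.2.2 (.leaf 0 0)) (B1 + a.2.1)) := by
  rw [playAux]

theorem sup_bound {K c b1 m : ℝ} (hc : 0 < c) (hK : 0 ≤ K)
    (H : ∀ b, b1 < b → b ≤ m → (m - b) * c ≤ K) : (m - b1) * c ≤ K := by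
  rcases le_or_gt m b1 with hmb | hmb
  · nlinarith
  · by_contra hcon
    push_neg at hcon
    set ε := (m - b1) * c - K with hεdef
    have hεpos : 0 < ε := by linarith
    have hd : 0 < ε / (2 * c) := by positivity
    set b := min m (b1 + ε / (2 * c)) with hb
    have h1 : b1 < b := lt_min hmb (by linarith)
    have h2 : b ≤ m := min_le_left _ _
    have h3 := H b h1 h2
    have h4 : b ≤ b1 + ε / (2 * c) := min_le_right _ _
    have h5 : (ε / (2 * c)) * c = ε / 2 := by field_simp
    nlinarith [mul_le_mul_of_nonneg_right (by linarith : m - (b1 + ε / (2*c)) ≤ m - b) (le_of_lt hc)]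

theorem count_mono1 {L : List (ℝ × ℝ)} {x y : ℝ} (hxy : x ≤ y) :
    (L.countP (fun t => t.1 ≤ x)) ≤ (L.countP (fun t => t.1 ≤ y)) := by
  apply List.countP_mono_left
  intro a _ h'
  simp only [decide_eq_true_eq] at h' ⊢
  linarith

theorem count_mono2 {L : List (ℝ × ℝ)} {x y : ℝ} (hxy : x ≤ y) :
    (L.countP (fun t => t.2 ≤ x)) ≤ (L.countP (fun t => t.2 ≤ y)) := by
  apply List.countP_mono_left
  intro a _ h'
  simp only [decide_eq_true_eq] at h' ⊢
  linarith
end GTree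

open GTree in
theorem satAll : ∀ (n : ℕ) (G : GTree), FullBin n G → ∀ (γ : Profile), IsPSPE γ G →
    ∀ B1 : ℝ, 0 ≤ B1 → B1 ≤ 1 →
    B1 * 2 ^ n ≤ ((leaves G).countP (fun t => t.1 ≤ (outcome γ G B1).1) : ℝ) ∧
    (1 - B1) * 2 ^ n ≤ ((leaves G).countP (fun t => t.2 ≤ (outcome γ G B1).2) : ℝ) := by
  intro n
  induction n with
  | zero =>
    intro G hG γ _ B1 hB0 hB1
    cases G with
    | node cs => exact (fullbin_zero hG).elim
    | leaf u1 u2 =>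
      have hout : outcome γ (GTree.leaf u1 u2) B1 = (u1, u2) := by
        rw [outcome]; exact playAux_leaf γ u1 u2 B1 _
      rw [hout]
      simp [leaves, List.countP_cons]
      constructor <;> linarith
  | succ m ih =>
    intro G hG γ hγ B1 hB0 hB1
    obtain ⟨l, r, rfl, hlf, hrf⟩ := fullbin_succ hG
    have hmem : ∀ c ∈ [l, r], FullBin m c := by
      intro c hc
      simp only [List.mem_cons, List.not_mem_nil, or_false] at hc
      rcases hc with rfl | rfl
      · exact hlf
      · exact hrf
    have hps : ∀ c ∈ [l, r], IsPSPE γ c := by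
      intro c hc cs hsubc B hB0' hB1'
      exact hγ cs (Subtree.trans' hsubc (Subtree.step hc (Subtree.refl c))) B hB0' hB1'
    have key1 : ∀ c ∈ [l, r], ∀ B x : ℝ, 0 ≤ B → B ≤ 1 → (outcome γ c B).1 ≤ x →
        B * 2 ^ m ≤ ((leaves c).countP (fun t => t.1 ≤ x) : ℝ) := by
      intro c hc B x h0 h1 hle
      refine ((ih c (hmem c hc) γ (hps c hc) B h0 h1).1).trans ?_
      exact_mod_cast count_mono1 hle
    have key2 : ∀ c ∈ [l, r], ∀ B x : ℝ, 0 ≤ B → B ≤ 1 → (outcome γ c B).2 ≤ x →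
        (1 - B) * 2 ^ m ≤ ((leaves c).countP (fun t => t.2 ≤ x) : ℝ) := by
      intro c hc B x h0 h1 hle
      refine ((ih c (hmem c hc) γ (hps c hc) B h0 h1).2).trans ?_
      exact_mod_cast count_mono2 hle
    obtain ⟨hval, heq⟩ := hγ [l, r] (Subtree.refl _) B1 hB0 hB1
    rcases e : γ (GTree.node [l, r]) B1 with ⟨b1, b2, i1, i2⟩
    rw [e] at hval heq
    simp only [validAct] at hval
    obtain ⟨h10, h1B, h20, h2B, hi1, hi2⟩ := hval
    have hi1' : i1 = 0 ∨ i1 = 1 := by simp at hi1; omega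
    have hi2' : i2 = 0 ∨ i2 = 1 := by simp at hi2; omega
    simp only [eqAct] at heq
    obtain ⟨c1, hc1eq, hc1or⟩ : ∃ c, [l, r].getD i1 (GTree.leaf 0 0) = c ∧ (c = l ∨ c = r) := by
      rcases hi1' with h | h <;> subst h <;> exact ⟨_, rfl, by simp [List.getD]⟩
    obtain ⟨c2, hc2eq, hc2or⟩ : ∃ c, [l, r].getD i2 (GTree.leaf 0 0) = c ∧ (c = l ∨ c = r) := by
      rcases hi2' with h | h <;> subst h <;> exact ⟨_, rfl, by simp [List.getD]⟩
    rw [hc1eq, hc2eq] at heq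
    have hc1m : c1 ∈ [l, r] := by rcases hc1or with rfl | rfl <;> simp
    have hc2m : c2 ∈ [l, r] := by rcases hc2or with rfl | rfl <;> simp
    have hheq : height (GTree.node [l, r]) = m + 1 := fullbin_height _ _ hG
    have hplay : ∀ c ∈ [l, r], ∀ B : ℝ, playAux γ m c B = outcome γ c B := by
      intro c hc B
      rw [outcome, fullbin_height m c (hmem c hc)]
    have hstep : outcome γ (GTree.node [l, r]) B1 =
        if b2 ≤ b1 then playAux γ m c1 (B1 - b1) else playAux γ m c2 (B1 + b2) := by
      show playAux γ (height (GTree.node [l, r])) (GTree.node [l, r]) B1 = _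
      rw [hheq, playAux_node, e]
      show (if b2 ≤ b1 then playAux γ m ([l, r].getD i1 (GTree.leaf 0 0)) (B1 - b1)
            else playAux γ m ([l, r].getD i2 (GTree.leaf 0 0)) (B1 + b2)) = _
      rw [hc1eq, hc2eq]
    have hout : outcome γ (GTree.node [l, r]) B1 =
        if b2 ≤ b1 then outcome γ c1 (B1 - b1) else outcome γ c2 (B1 + b2) := by
      rw [hstep, hplay c1 hc1m (B1 - b1), hplay c2 hc2m (B1 + b2)]
    have hleq : leaves (GTree.node [l, r]) = leaves l ++ leaves r := by simp [leaves]
    rw [hleq, List.countP_append, List.countP_append]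
    push_cast
    rw [hout]
    by_cases hw : b2 ≤ b1
    · -- player 1 wins the bid
      rw [if_pos hw] at heq ⊢
      obtain ⟨-, -, hw1, hw2, hw3⟩ := heq
      have hb2B : b2 ≤ B1 := le_trans hw h1B
      constructor
      · -- player 1 bound
        have base1 : ∀ c ∈ [l, r], (B1 - b2) * 2 ^ m ≤
            ((leaves c).countP (fun t => t.1 ≤ (outcome γ c1 (B1 - b1)).1) : ℝ) := by
          intro c hc
          exact key1 c hc (B1 - b2) _ (by linarith) (by linarith) (hw1 b2 h20 hb2B le_rfl c hc)
        have extra1 : (B1 + b2) * 2 ^ m ≤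
            ((leaves c2).countP (fun t => t.1 ≤ (outcome γ c1 (B1 - b1)).1) : ℝ) := by
          rcases eq_or_lt_of_le h20 with h0 | h0
          · have hb := base1 c2 hc2m
            rw [← h0] at hb ⊢
            simpa using hb
          · exact key1 c2 hc2m (B1 + b2) _ (by linarith) (by linarith) (hw2 h0)
        have hbl := base1 l (by simp)
        have hbr := base1 r (by simp)
        rcases hc2or with rfl | rfl
        · calc B1 * 2 ^ (m + 1) = (B1 + b2) * 2 ^ m + (B1 - b2) * 2 ^ m := by rw [pow_succ]; ring
            _ ≤ _ := add_le_add extra1 hbr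
        · calc B1 * 2 ^ (m + 1) = (B1 - b2) * 2 ^ m + (B1 + b2) * 2 ^ m := by rw [pow_succ]; ring
            _ ≤ _ := add_le_add hbl extra1
      · -- player 2 bound
        have hcl2 : (1 - (B1 - b1)) * 2 ^ m ≤
            ((leaves c1).countP (fun t => t.2 ≤ (outcome γ c1 (B1 - b1)).2) : ℝ) :=
          key2 c1 hc1m (B1 - b1) _ (by linarith) (by linarith) le_rfl
        have hother2 : ∀ c ∈ [l, r], (1 - B1 - b1) * 2 ^ m ≤
            ((leaves c).countP (fun t => t.2 ≤ (outcome γ c1 (B1 - b1)).2) : ℝ) := by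
          intro c hc
          refine sup_bound (m := 1 - B1) (c := (2:ℝ) ^ m) (by positivity) (Nat.cast_nonneg _) ?_
          intro b hb1 hbm
          have h := key2 c hc (B1 + b) _ (by linarith) (by linarith) (hw3 b hbm hb1 c hc)
          calc (1 - B1 - b) * 2 ^ m = (1 - (B1 + b)) * 2 ^ m := by ring
            _ ≤ _ := h
        have hol := hother2 l (by simp)
        have hor := hother2 r (by simp)
        rcases hc1or with rfl | rfl
        · calc (1 - B1) * 2 ^ (m + 1)
              = (1 - (B1 - b1)) * 2 ^ m + (1 - B1 - b1) * 2 ^ m := by rw [pow_succ]; ring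
            _ ≤ _ := add_le_add hcl2 hor
        · calc (1 - B1) * 2 ^ (m + 1)
              = (1 - B1 - b1) * 2 ^ m + (1 - (B1 - b1)) * 2 ^ m := by rw [pow_succ]; ring
            _ ≤ _ := add_le_add hol hcl2
    · -- player 2 wins the bid
      rw [if_neg hw] at heq ⊢
      obtain ⟨-, -, hl1, hl2, hl3⟩ := heq
      have hlt : b1 < b2 := not_le.mp hw
      constructor
      · -- player 1 bound
        have hAc2 : (B1 + b2) * 2 ^ m ≤
            ((leaves c2).countP (fun t => t.1 ≤ (outcome γ c2 (B1 + b2)).1) : ℝ) :=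
          key1 c2 hc2m (B1 + b2) _ (by linarith) (by linarith) le_rfl
        have base1 : ∀ c ∈ [l, r], (B1 - b2) * 2 ^ m ≤
            ((leaves c).countP (fun t => t.1 ≤ (outcome γ c2 (B1 + b2)).1) : ℝ) := by
          intro c hc
          rcases le_or_gt b2 B1 with hcase | hcase
          · exact key1 c hc (B1 - b2) _ (by linarith) (by linarith) (hl3 b2 h20 hcase le_rfl c hc)
          · have h2m : (0:ℝ) < 2 ^ m := by positivity
            have hneg : (B1 - b2) * 2 ^ m ≤ 0 := by nlinarith
            exact hneg.trans (Nat.cast_nonneg _)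
        have hbl := base1 l (by simp)
        have hbr := base1 r (by simp)
        rcases hc2or with rfl | rfl
        · calc B1 * 2 ^ (m + 1) = (B1 + b2) * 2 ^ m + (B1 - b2) * 2 ^ m := by rw [pow_succ]; ring
            _ ≤ _ := add_le_add hAc2 hbr
        · calc B1 * 2 ^ (m + 1) = (B1 - b2) * 2 ^ m + (B1 + b2) * 2 ^ m := by rw [pow_succ]; ring
            _ ≤ _ := add_le_add hbl hAc2
      · -- player 2 bound
        have hdrop : (1 - B1 + b1) * 2 ^ m ≤
            ((leaves c1).countP (fun t => t.2 ≤ (outcome γ c2 (B1 + b2)).2) : ℝ) := by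
          have h := key2 c1 hc1m (B1 - b1) _ (by linarith) (by linarith) hl2
          calc (1 - B1 + b1) * 2 ^ m = (1 - (B1 - b1)) * 2 ^ m := by ring
            _ ≤ _ := h
        have hother : ∀ c ∈ [l, r], (1 - B1 - b1) * 2 ^ m ≤
            ((leaves c).countP (fun t => t.2 ≤ (outcome γ c2 (B1 + b2)).2) : ℝ) := by
          intro c hc
          refine sup_bound (m := 1 - B1) (c := (2:ℝ) ^ m) (by positivity) (Nat.cast_nonneg _) ?_
          intro b hb1 hbm
          have h := key2 c hc (B1 + b) _ (by linarith) (by linarith) (hl1 b (by linarith) hbm hb1 c hc)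
          calc (1 - B1 - b) * 2 ^ m = (1 - (B1 + b)) * 2 ^ m := by ring
            _ ≤ _ := h
        have hol := hother l (by simp)
        have hor := hother r (by simp)
        rcases hc1or with rfl | rfl
        · calc (1 - B1) * 2 ^ (m + 1)
              = (1 - B1 + b1) * 2 ^ m + (1 - B1 - b1) * 2 ^ m := by rw [pow_succ]; ring
            _ ≤ _ := add_le_add hdrop hor
        · calc (1 - B1) * 2 ^ (m + 1)
              = (1 - B1 - b1) * 2 ^ m + (1 - B1 + b1) * 2 ^ m := by rw [pow_succ]; ring
            _ ≤ _ := add_le_add hol hdrop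


/-- Let `G` be a bidding game over a full binary tree of height
`h` with leaf set `T` (`|T| = 2^h`), played with budgets `(B1, B2)`,
`B1 + B2 = 1`. Any pure subgame-perfect equilibrium outcome `t*` satisfies the
`(B1, B2)`-satisfaction test: each player `i` weakly prefers `t*` to at least
`⌈B_i·|T|⌉` leaves. -/
theorem stmt14 (h : ℕ) (G : GTree) (hfull : FullBin h G)
    (γ : Profile) (hγ : IsPSPE γ G) (B1 : ℝ) (hB0 : 0 ≤ B1) (hB1 : B1 ≤ 1) :
    (⌈B1 * (2 : ℝ) ^ h⌉ ≤
      ((leaves G).countP (fun t => t.1 ≤ (outcome γ G B1).1) : ℤ)) ∧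
    (⌈(1 - B1) * (2 : ℝ) ^ h⌉ ≤
      ((leaves G).countP (fun t => t.2 ≤ (outcome γ G B1).2) : ℤ)) := by
  obtain ⟨s1, s2⟩ := satAll h G hfull γ hγ B1 hB0 hB1
  constructor
  · rw [Int.ceil_le]; push_cast; exact s1
  · rw [Int.ceil_le]; push_cast; exact s2
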